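/- Let p be a prime, q = p, and let μ be the Haar measure on ℤ_p⁵ normalized so that μ(ℤ_p⁵) = 1, with coordinates (x, y, ỹ₁, ỹ₂, ỹ₃). Let Ω₄ be the set of points in (pℤ_p)⁵ whose p-adic valuations (X, Y, Ỹ₁, Ỹ₂, Ỹ₃) satisfy Y < X, Y = Ỹ₁, Y ≤ Ỹ₂ and Y ≤ Ỹ₃. Then for all real numbers ρ, τ > 0, the integral over Ω₄ of |x|_p^τ · |ỹ₁|_p^{2ρ} · max(|x|_p, |y|_p)^{2ρ} dμ equals q^{-6-2τ-4ρ}(1 - q^{-1})³ / ((1 - q^{-1-τ})(1 - q^{-5-τ-4ρ})). -/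

import Mathlib

open MeasureTheory

noncomputable instance padicIntMeasurableSpace (p : ℕ) [Fact p.Prime] :
    MeasurableSpace ℤ_[p] := borel _

instance padicIntBorelSpace (p : ℕ) [Fact p.Prime] : BorelSpace ℤ_[p] := ⟨rfl⟩

/-- The Haar measure on `ℤ_[p]`, normalized so that `ℤ_[p]` itself has measure `1`. -/
noncomputable def padicHaar (p : ℕ) [Fact p.Prime] : Measure ℤ_[p] :=
  Measure.addHaarMeasure ⊤

instance padicHaarProb (p : ℕ) [Fact p.Prime] : IsProbabilityMeasure (padicHaar p) := ⟨by
  simpa [padicHaar] using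
    Measure.addHaarMeasure_self (K₀ := (⊤ : TopologicalSpace.PositiveCompacts ℤ_[p]))⟩

/-- The product Haar measure on `ℤ_p⁵`, with coordinates `(x, y, ỹ₁, ỹ₂, ỹ₃)`, normalized
to total mass `1`. -/
noncomputable def padicHaar5 (p : ℕ) [Fact p.Prime] :
    Measure (ℤ_[p] × ℤ_[p] × ℤ_[p] × ℤ_[p] × ℤ_[p]) :=
  (padicHaar p).prod ((padicHaar p).prod ((padicHaar p).prod
    ((padicHaar p).prod (padicHaar p))))

/-!
Split `Ω₄` according to `v(y) = n + 1`. On the `n`-th layer the conditions decouple: the layer is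
the product `B(n+2) × S(n+1) × S(n+1) × B(n+1) × B(n+1)` of balls `B(m) = {|x| ≤ p⁻ᵐ}` and
spheres `S(m) = {|x| = p⁻ᵐ}`, and since `max(|x|, |y|) = |y| = |ỹ₁|` there, the integrand is
`|x|^τ |y|^{2ρ} |ỹ₁|^{2ρ}`. As `B(m) = pᵐℤ_p` has index `pᵐ`, it has measure `p⁻ᵐ`; hence
`∫_{S(m)} |x|^s = (1 - p⁻¹) p^{-(1+s)m}`, and summing over the spheres inside a ball,
`∫_{B(m)} |x|^s = (1 - p⁻¹) p^{-(1+s)m} / (1 - p^{-1-s})`. The layers then contribute a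
geometric series of ratio `p^{-5-τ-4ρ}`.
-/

open Metric Function

lemma one_lt_natCast_prime {p : ℕ} [Fact p.Prime] : (1 : ℝ) < p :=
  mod_cast (Fact.out : p.Prime).one_lt

namespace PadicInt

variable {p : ℕ} [Fact p.Prime]

lemma closedBall_zpow_eq_span (n : ℕ) :
    closedBall (0 : ℤ_[p]) ((p : ℝ) ^ (-n : ℤ)) = (Ideal.span {(p : ℤ_[p]) ^ n} : Set ℤ_[p]) := by
  ext x
  rw [mem_closedBall_zero_iff, norm_le_pow_iff_mem_span_pow]
  rfl

lemma index_span_pow (n : ℕ) :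
    (Ideal.span {(p : ℤ_[p]) ^ n}).toAddSubgroup.index = p ^ n := by
  rw [← ker_toZModPow, AddSubgroup.index_eq_card]
  exact (Nat.card_congr (RingHom.quotientKerEquivOfSurjective
    (ZMod.ringHom_surjective (toZModPow n))).toEquiv).trans (Nat.card_zmod _)

lemma ball_zpow_eq_closedBall (n : ℤ) :
    ball (0 : ℤ_[p]) ((p : ℝ) ^ n) = closedBall 0 ((p : ℝ) ^ (n - 1)) := by
  ext x
  simp [norm_lt_pow_iff_norm_le_pow_sub_one]

lemma sphere_zpow_eq_sdiff (n : ℕ) :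
    sphere (0 : ℤ_[p]) ((p : ℝ) ^ (-n : ℤ)) =
      closedBall 0 ((p : ℝ) ^ (-n : ℤ)) \ closedBall 0 ((p : ℝ) ^ (-(n + 1 : ℕ) : ℤ)) := by
  rw [← closedBall_sdiff_ball, ball_zpow_eq_closedBall]
  push_cast
  ring_nf

lemma pairwise_disjoint_sphere_zpow :
    Pairwise (Disjoint on fun n : ℕ => sphere (0 : ℤ_[p]) ((p : ℝ) ^ (-n : ℤ))) := by
  intro m n hmn
  refine Set.disjoint_left.2 fun x hm hn => hmn ?_
  rw [mem_sphere_zero_iff_norm] at hm hn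
  have := zpow_right_injective₀ (zero_lt_one.trans one_lt_natCast_prime)
    one_lt_natCast_prime.ne' (hm.symm.trans hn)
  omega

lemma closedBall_zpow_sdiff_zero (m : ℕ) :
    closedBall (0 : ℤ_[p]) ((p : ℝ) ^ (-m : ℤ)) \ {0} =
      ⋃ j : ℕ, sphere 0 ((p : ℝ) ^ (-(m + j : ℕ) : ℤ)) := by
  ext x
  simp only [Set.mem_sdiff, mem_closedBall_zero_iff, Set.mem_singleton_iff, Set.mem_iUnion,
    mem_sphere_zero_iff_norm]
  constructor
  · rintro ⟨hle, hx⟩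
    rw [norm_eq_zpow_neg_valuation hx] at hle ⊢
    have hm : m ≤ x.valuation := by
      have := (zpow_le_zpow_iff_right₀ one_lt_natCast_prime).1 hle
      omega
    exact ⟨x.valuation - m, by congr; omega⟩
  · rintro ⟨j, hj⟩
    refine ⟨hj ▸ zpow_le_zpow_right₀ one_lt_natCast_prime.le (by omega), fun hx => ?_⟩
    rw [hx, norm_zero] at hj
    exact (zpow_pos (zero_lt_one.trans one_lt_natCast_prime) _).ne hj

section Measure

variable (μ : Measure ℤ_[p]) [μ.IsAddLeftInvariant] [IsProbabilityMeasure μ]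

lemma measure_closedBall_zpow (n : ℕ) :
    μ (closedBall 0 ((p : ℝ) ^ (-n : ℤ))) = ENNReal.ofReal ((p : ℝ)⁻¹ ^ n) := by
  have hp : (0 : ℝ) < p := zero_lt_one.trans one_lt_natCast_prime
  have : (Ideal.span {(p : ℤ_[p]) ^ n}).toAddSubgroup.FiniteIndex :=
    ⟨by rw [index_span_pow]; exact pow_ne_zero _ (Fact.out : p.Prime).ne_zero⟩
  have h := AddSubgroup.index_mul_measure (Ideal.span {(p : ℤ_[p]) ^ n}).toAddSubgroup
    (by rw [Submodule.coe_toAddSubgroup, ← closedBall_zpow_eq_span]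
        exact measurableSet_closedBall) μ
  rw [index_span_pow, measure_univ, Submodule.coe_toAddSubgroup, ← closedBall_zpow_eq_span] at h
  rw [ENNReal.ofReal_pow (by positivity), ENNReal.ofReal_inv_of_pos hp,
    ENNReal.ofReal_natCast, ← ENNReal.inv_pow]
  exact ENNReal.eq_inv_of_mul_eq_one_left (by rw [mul_comm]; exact_mod_cast h)

lemma measure_sphere_zpow (n : ℕ) :
    μ (sphere 0 ((p : ℝ) ^ (-n : ℤ))) = ENNReal.ofReal ((1 - (p : ℝ)⁻¹) * (p : ℝ)⁻¹ ^ n) := by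
  rw [sphere_zpow_eq_sdiff, measure_sdiff (closedBall_subset_closedBall
      (zpow_le_zpow_right₀ one_lt_natCast_prime.le (by omega)))
      measurableSet_closedBall.nullMeasurableSet (measure_ne_top _ _),
    measure_closedBall_zpow, measure_closedBall_zpow, ← ENNReal.ofReal_sub _ (by positivity)]
  ring_nf

lemma measure_singleton_zero : μ {0} = 0 := by
  have hle (n : ℕ) : μ {0} ≤ ENNReal.ofReal ((p : ℝ)⁻¹ ^ n) :=
    measure_closedBall_zpow μ n ▸ measure_mono (by simp)
  have hlim : Filter.Tendsto (fun n : ℕ => ENNReal.ofReal ((p : ℝ)⁻¹ ^ n)) Filter.atTop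
      (nhds 0) := by
    simpa using ENNReal.tendsto_ofReal (tendsto_pow_atTop_nhds_zero_of_lt_one (by positivity)
      (inv_lt_one_of_one_lt₀ one_lt_natCast_prime))
  exact le_antisymm (ge_of_tendsto' hlim hle) bot_le

lemma setLIntegral_sphere_norm_rpow (s : ℝ) (n : ℕ) :
    ∫⁻ x in sphere 0 ((p : ℝ) ^ (-n : ℤ)), ENNReal.ofReal (‖x‖ ^ s) ∂μ =
      ENNReal.ofReal ((1 - (p : ℝ)⁻¹) * ((p : ℝ) ^ (-1 - s)) ^ n) := by
  have hp : (0 : ℝ) < p := zero_lt_one.trans one_lt_natCast_prime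
  rw [setLIntegral_congr_fun isClosed_sphere.measurableSet
      fun x hx => by rw [mem_sphere_zero_iff_norm.1 hx],
    setLIntegral_const, measure_sphere_zpow, ← ENNReal.ofReal_mul (by positivity)]
  congr 1
  rw [← Real.rpow_intCast, ← Real.rpow_mul hp.le, ← Real.rpow_natCast, Real.inv_rpow hp.le,
    ← Real.rpow_neg hp.le, ← Real.rpow_mul_natCast hp.le, mul_left_comm, ← Real.rpow_add hp]
  push_cast
  ring_nf

lemma setLIntegral_closedBall_norm_rpow {s : ℝ} (hs : -1 < s) (m : ℕ) :
    ∫⁻ x in closedBall 0 ((p : ℝ) ^ (-m : ℤ)), ENNReal.ofReal (‖x‖ ^ s) ∂μ =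
      ENNReal.ofReal ((1 - (p : ℝ)⁻¹) * ((p : ℝ) ^ (-1 - s)) ^ m / (1 - (p : ℝ) ^ (-1 - s))) := by
  set r := (p : ℝ) ^ (-1 - s)
  have hr0 : 0 ≤ r := by positivity
  have hr1 : r < 1 := Real.rpow_lt_one_of_one_lt_of_neg one_lt_natCast_prime (by linarith)
  have hc : 0 ≤ (1 - (p : ℝ)⁻¹) * r ^ m :=
    mul_nonneg (sub_nonneg.2 (inv_le_one_of_one_le₀ one_lt_natCast_prime.le)) (by positivity)
  rw [← Measure.restrict_congr_set (sdiff_null_ae_eq_self (measure_singleton_zero μ)),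
    closedBall_zpow_sdiff_zero, lintegral_iUnion (fun _ => isClosed_sphere.measurableSet)
      (pairwise_disjoint_sphere_zpow.comp_of_injective (add_right_injective m))]
  simp_rw [setLIntegral_sphere_norm_rpow, pow_add, ← mul_assoc]
  rw [← ENNReal.ofReal_tsum_of_nonneg (fun j => mul_nonneg hc (pow_nonneg hr0 j))
    ((summable_geometric_of_lt_one hr0 hr1).mul_left _), tsum_mul_left,
    tsum_geometric_of_lt_one hr0 hr1, div_eq_mul_inv]

end Measure

lemma exists_norm_eq_zpow_succ {y : ℤ_[p]} (hy0 : y ≠ 0) (hy1 : ‖y‖ < 1) :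
    ∃ n : ℕ, ‖y‖ = (p : ℝ) ^ (-(n + 1 : ℕ) : ℤ) := by
  rw [norm_eq_zpow_neg_valuation hy0] at hy1 ⊢
  have hv : y.valuation ≠ 0 := by
    rintro hv
    simp [hv] at hy1
  exact ⟨y.valuation - 1, by congr; omega⟩

end PadicInt

open ENNReal PadicInt

lemma setLIntegral_prod_mul {α β : Type*} [MeasurableSpace α] [MeasurableSpace β]
    {μ : Measure α} {ν : Measure β} [SFinite μ] [SFinite ν] {f : α → ℝ≥0∞} {g : β → ℝ≥0∞}
    {s : Set α} {t : Set β} (hf : AEMeasurable f (μ.restrict s))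
    (hg : AEMeasurable g (ν.restrict t)) :
    ∫⁻ z in s ×ˢ t, f z.1 * g z.2 ∂μ.prod ν = (∫⁻ x in s, f x ∂μ) * ∫⁻ y in t, g y ∂ν := by
  rw [← Measure.prod_restrict, lintegral_prod_mul hf hg]

lemma setLIntegral_prod_mul₅ {α₁ α₂ α₃ α₄ α₅ : Type*} [MeasurableSpace α₁] [MeasurableSpace α₂]
    [MeasurableSpace α₃] [MeasurableSpace α₄] [MeasurableSpace α₅] {μ₁ : Measure α₁}
    {μ₂ : Measure α₂} {μ₃ : Measure α₃} {μ₄ : Measure α₄} {μ₅ : Measure α₅} [SFinite μ₁]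
    [SFinite μ₂] [SFinite μ₃] [SFinite μ₄] [SFinite μ₅] {f₁ : α₁ → ℝ≥0∞} {f₂ : α₂ → ℝ≥0∞}
    {f₃ : α₃ → ℝ≥0∞} {f₄ : α₄ → ℝ≥0∞} {f₅ : α₅ → ℝ≥0∞} (h₁ : Measurable f₁)
    (h₂ : Measurable f₂) (h₃ : Measurable f₃) (h₄ : Measurable f₄) (h₅ : Measurable f₅)
    (s₁ : Set α₁) (s₂ : Set α₂) (s₃ : Set α₃) (s₄ : Set α₄) (s₅ : Set α₅) :
    ∫⁻ z in s₁ ×ˢ s₂ ×ˢ s₃ ×ˢ s₄ ×ˢ s₅,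
        f₁ z.1 * (f₂ z.2.1 * (f₃ z.2.2.1 * (f₄ z.2.2.2.1 * f₅ z.2.2.2.2)))
        ∂μ₁.prod (μ₂.prod (μ₃.prod (μ₄.prod μ₅))) =
      (∫⁻ x in s₁, f₁ x ∂μ₁) * ((∫⁻ x in s₂, f₂ x ∂μ₂) * ((∫⁻ x in s₃, f₃ x ∂μ₃) *
        ((∫⁻ x in s₄, f₄ x ∂μ₄) * ∫⁻ x in s₅, f₅ x ∂μ₅))) := by
  rw [← setLIntegral_prod_mul, ← setLIntegral_prod_mul, ← setLIntegral_prod_mul,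
    ← setLIntegral_prod_mul] <;> fun_prop

def omega4Layer (p : ℕ) [Fact p.Prime] (n : ℕ) :
    Set (ℤ_[p] × ℤ_[p] × ℤ_[p] × ℤ_[p] × ℤ_[p]) :=
  closedBall 0 ((p : ℝ) ^ (-(n + 2 : ℕ) : ℤ)) ×ˢ sphere 0 ((p : ℝ) ^ (-(n + 1 : ℕ) : ℤ)) ×ˢ
    sphere 0 ((p : ℝ) ^ (-(n + 1 : ℕ) : ℤ)) ×ˢ closedBall 0 ((p : ℝ) ^ (-(n + 1 : ℕ) : ℤ)) ×ˢ
    closedBall 0 ((p : ℝ) ^ (-(n + 1 : ℕ) : ℤ))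

variable {p : ℕ} [Fact p.Prime]

lemma measurableSet_omega4Layer (n : ℕ) : MeasurableSet (omega4Layer p n) :=
  measurableSet_closedBall.prod <| isClosed_sphere.measurableSet.prod <|
    isClosed_sphere.measurableSet.prod <| measurableSet_closedBall.prod measurableSet_closedBall

lemma pairwise_disjoint_omega4Layer : Pairwise (Disjoint on omega4Layer p) := fun m n hmn =>
  Set.disjoint_left.2 fun _ hm hn => Set.disjoint_left.1
    (pairwise_disjoint_sphere_zpow (p := p) (by omega : m + 1 ≠ n + 1)) hm.2.1 hn.2.1

lemma setOf_omega4_eq_iUnion :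
    {z : ℤ_[p] × ℤ_[p] × ℤ_[p] × ℤ_[p] × ℤ_[p] |
        ‖z.1‖ < 1 ∧ ‖z.2.1‖ < 1 ∧ ‖z.2.2.1‖ < 1 ∧ ‖z.2.2.2.1‖ < 1 ∧ ‖z.2.2.2.2‖ < 1 ∧
        ‖z.1‖ < ‖z.2.1‖ ∧ ‖z.2.1‖ = ‖z.2.2.1‖ ∧ ‖z.2.2.2.1‖ ≤ ‖z.2.1‖ ∧
        ‖z.2.2.2.2‖ ≤ ‖z.2.1‖} = ⋃ n, omega4Layer p n := by
  ext ⟨x, y, y₁, y₂, y₃⟩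
  simp only [omega4Layer, Set.mem_ofPred_eq, Set.mem_iUnion, Set.mem_prod,
    mem_closedBall_zero_iff, mem_sphere_zero_iff_norm]
  constructor
  · rintro ⟨-, hy, -, -, -, hxy, hyy₁, hy₂, hy₃⟩
    obtain ⟨n, hn⟩ := exists_norm_eq_zpow_succ (norm_pos_iff.1 ((norm_nonneg x).trans_lt hxy)) hy
    refine ⟨n, ?_, hn, hyy₁ ▸ hn, hn ▸ hy₂, hn ▸ hy₃⟩
    rw [hn, norm_lt_pow_iff_norm_le_pow_sub_one] at hxy
    convert hxy using 3
    omega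
  · rintro ⟨n, hx, hy, hy₁, hy₂, hy₃⟩
    have hlt : (p : ℝ) ^ (-(n + 2 : ℕ) : ℤ) < (p : ℝ) ^ (-(n + 1 : ℕ) : ℤ) :=
      zpow_lt_zpow_right₀ one_lt_natCast_prime (by omega)
    have hlt₁ : (p : ℝ) ^ (-(n + 1 : ℕ) : ℤ) < 1 :=
      zpow_lt_one_of_neg₀ one_lt_natCast_prime (by omega)
    exact ⟨hx.trans_lt (hlt.trans hlt₁), hy ▸ hlt₁, hy₁ ▸ hlt₁, hy₂.trans_lt hlt₁,
      hy₃.trans_lt hlt₁, hy ▸ hx.trans_lt hlt, hy.trans hy₁.symm, hy ▸ hy₂, hy ▸ hy₃⟩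

lemma setLIntegral_omega4Layer (μ : Measure ℤ_[p]) [μ.IsAddLeftInvariant] [IsProbabilityMeasure μ]
    {ρ τ : ℝ} (hτ : -1 < τ) (n : ℕ) :
    ∫⁻ z in omega4Layer p n,
        ENNReal.ofReal (‖z.1‖ ^ τ * ‖z.2.2.1‖ ^ (2 * ρ) * (max ‖z.1‖ ‖z.2.1‖) ^ (2 * ρ))
        ∂μ.prod (μ.prod (μ.prod (μ.prod μ))) =
      ENNReal.ofReal ((p : ℝ) ^ (-6 - 2 * τ - 4 * ρ) * (1 - (p : ℝ)⁻¹) ^ 3 /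
        (1 - (p : ℝ) ^ (-1 - τ)) * ((p : ℝ) ^ (-5 - τ - 4 * ρ)) ^ n) := by
  have hp : (0 : ℝ) < p := zero_lt_one.trans one_lt_natCast_prime
  have hc : 0 ≤ 1 - (p : ℝ)⁻¹ := sub_nonneg.2 (inv_le_one_of_one_le₀ one_lt_natCast_prime.le)
  have ha : (p : ℝ) ^ (-1 - τ) < 1 :=
    Real.rpow_lt_one_of_one_lt_of_neg one_lt_natCast_prime (by linarith)
  have hsplit : ∀ z ∈ omega4Layer p n,
      ENNReal.ofReal (‖z.1‖ ^ τ * ‖z.2.2.1‖ ^ (2 * ρ) * (max ‖z.1‖ ‖z.2.1‖) ^ (2 * ρ)) =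
        ENNReal.ofReal (‖z.1‖ ^ τ) * (ENNReal.ofReal (‖z.2.1‖ ^ (2 * ρ)) *
          (ENNReal.ofReal (‖z.2.2.1‖ ^ (2 * ρ)) * (1 * 1))) := by
    rintro ⟨x, y, y₁, y₂, y₃⟩ ⟨hx, hy, -⟩
    rw [mem_closedBall_zero_iff] at hx
    rw [mem_sphere_zero_iff_norm] at hy
    have hxy : ‖x‖ ≤ ‖y‖ := hy ▸ hx.trans (zpow_le_zpow_right₀ one_lt_natCast_prime.le (by omega))
    rw [max_eq_right hxy, mul_one, mul_one, ← ENNReal.ofReal_mul (by positivity),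
      ← ENNReal.ofReal_mul (by positivity)]
    ring_nf
  have hnorm (s : ℝ) : Measurable fun x : ℤ_[p] => ENNReal.ofReal (‖x‖ ^ s) := by fun_prop
  rw [setLIntegral_congr_fun (measurableSet_omega4Layer n) hsplit, omega4Layer,
    setLIntegral_prod_mul₅ (hnorm τ) (hnorm _) (hnorm _) measurable_const measurable_const,
    setLIntegral_closedBall_norm_rpow μ hτ, setLIntegral_sphere_norm_rpow, setLIntegral_one,
    measure_closedBall_zpow]
  set a := (p : ℝ) ^ (-1 - τ)
  set b := (p : ℝ) ^ (-1 - 2 * ρ)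
  have hexp : a ^ (n + 2) * b ^ (n + 1) * b ^ (n + 1) * (p : ℝ)⁻¹ ^ (n + 1) * (p : ℝ)⁻¹ ^ (n + 1)
      = (p : ℝ) ^ (-6 - 2 * τ - 4 * ρ) * ((p : ℝ) ^ (-5 - τ - 4 * ρ)) ^ n := by
    simp only [a, b, ← Real.rpow_neg_one (p : ℝ), ← Real.rpow_mul_natCast hp.le,
      ← Real.rpow_add hp]
    congr 1
    push_cast
    ring
  have h₁ : 0 ≤ (1 - (p : ℝ)⁻¹) * a ^ (n + 2) / (1 - a) :=
    div_nonneg (mul_nonneg hc (by positivity)) (by linarith)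
  have h₂ : 0 ≤ (1 - (p : ℝ)⁻¹) * b ^ (n + 1) := mul_nonneg hc (by positivity)
  rw [← ENNReal.ofReal_mul (by positivity : (0 : ℝ) ≤ (p : ℝ)⁻¹ ^ (n + 1)),
    ← ENNReal.ofReal_mul h₂, ← ENNReal.ofReal_mul h₂, ← ENNReal.ofReal_mul h₁]
  congr 1
  linear_combination (1 - (p : ℝ)⁻¹) ^ 3 / (1 - a) * hexp

instance padicHaar_isAddLeftInvariant (p : ℕ) [Fact p.Prime] :
    (padicHaar p).IsAddLeftInvariant := by
  unfold padicHaar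
  infer_instance

/-- On the region `Ω₄ ⊆ (pℤ_p)⁵` where the valuations satisfy `Y < X`, `Y = Ỹ₁`,
`Y ≤ Ỹ₂`, `Y ≤ Ỹ₃` (equivalently, in terms of absolute values, `|x| < |y|`,
`|y| = |ỹ₁|`, `|ỹ₂| ≤ |y|`, `|ỹ₃| ≤ |y|`),
`∫_{Ω₄} |x|^τ |ỹ₁|^{2ρ} max(|x|,|y|)^{2ρ} dμ
  = q^{-6-2τ-4ρ}(1-q⁻¹)³ / ((1-q^{-1-τ})(1-q^{-5-τ-4ρ}))` with `q = p`. -/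
theorem integral_Omega4 (p : ℕ) [Fact p.Prime] (ρ τ : ℝ) (hρ : 0 < ρ) (hτ : 0 < τ) :
    ∫ z in {z : ℤ_[p] × ℤ_[p] × ℤ_[p] × ℤ_[p] × ℤ_[p] |
        ‖z.1‖ < 1 ∧ ‖z.2.1‖ < 1 ∧ ‖z.2.2.1‖ < 1 ∧ ‖z.2.2.2.1‖ < 1 ∧ ‖z.2.2.2.2‖ < 1 ∧
        ‖z.1‖ < ‖z.2.1‖ ∧ ‖z.2.1‖ = ‖z.2.2.1‖ ∧ ‖z.2.2.2.1‖ ≤ ‖z.2.1‖ ∧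
        ‖z.2.2.2.2‖ ≤ ‖z.2.1‖},
        ‖z.1‖ ^ τ * ‖z.2.2.1‖ ^ (2 * ρ) * (max ‖z.1‖ ‖z.2.1‖) ^ (2 * ρ)
        ∂(padicHaar5 p) =
      (p : ℝ) ^ (-6 - 2 * τ - 4 * ρ) * (1 - (p : ℝ)⁻¹) ^ 3 /
        ((1 - (p : ℝ) ^ (-1 - τ)) * (1 - (p : ℝ) ^ (-5 - τ - 4 * ρ))) := by
  have hp : (1 : ℝ) < p := one_lt_natCast_prime
  set r := (p : ℝ) ^ (-5 - τ - 4 * ρ)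
  have hr0 : 0 ≤ r := by positivity
  have hr1 : r < 1 := Real.rpow_lt_one_of_one_lt_of_neg hp (by linarith)
  have hC : 0 ≤ (p : ℝ) ^ (-6 - 2 * τ - 4 * ρ) * (1 - (p : ℝ)⁻¹) ^ 3 / (1 - (p : ℝ) ^ (-1 - τ)) :=
    div_nonneg (mul_nonneg (by positivity) (pow_nonneg (sub_nonneg.2
      (inv_le_one_of_one_le₀ hp.le)) 3))
      (sub_nonneg.2 (Real.rpow_le_one_of_one_le_of_nonpos hp.le (by linarith)))
  rw [integral_eq_lintegral_of_nonneg_ae (ae_of_all _ fun z => by positivity) (by fun_prop),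
    setOf_omega4_eq_iUnion, lintegral_iUnion measurableSet_omega4Layer
      pairwise_disjoint_omega4Layer, padicHaar5,
    tsum_congr (setLIntegral_omega4Layer (padicHaar p) (by linarith)),
    ← ENNReal.ofReal_tsum_of_nonneg (fun n => mul_nonneg hC (pow_nonneg hr0 n))
      ((summable_geometric_of_lt_one hr0 hr1).mul_left _),
    tsum_mul_left, tsum_geometric_of_lt_one hr0 hr1,
    ENNReal.toReal_ofReal (mul_nonneg hC (inv_nonneg.2 (by linarith))), ← div_eq_mul_inv, div_div]
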